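/- Let v ≥ 10⁴ and c, C > 0 be reals such that −c ≤ (x − ψ(x))/√x ≤ C for all x ∈ [100, v], and assume ψ(x) ≤ 1.03883·x for all x > 0. Let k ≥ 0 be an integer and let b be a real with max(10⁴, e^{2k}) ≤ e^b ≤ v. Then for all x ∈ [e^b, v] one has θ(x) ≥ x − 𝒞_{b,k}·x/(log x)^k, where 𝒞_{b,k} = b^k·( (C + 1)·e^{−b/2} + 1.03883·e^{−2b/3} + c·e^{−3b/4} + 1.03883·e^{−4b/5} ). -/

import Mathlib

/-- Chebyshev theta function: `θ(x) = ∑_{p ≤ x, p prime} log p`. -/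
noncomputable def chebTheta (x : ℝ) : ℝ :=
  ∑ p ∈ (Finset.range (⌊x⌋₊ + 1)).filter Nat.Prime, Real.log p

/-- Chebyshev psi function: `ψ(x) = ∑_{n ≤ x} Λ(n)`. -/
noncomputable def chebPsi (x : ℝ) : ℝ :=
  ∑ n ∈ Finset.range (⌊x⌋₊ + 1), ArithmeticFunction.vonMangoldt n

/-!
By the Costa Pereira inequality `ψ(x) - θ(x) ≤ ψ(x^{1/2}) + ψ(x^{1/3}) + ψ(x^{1/5})`, the
hypothesis at `x` and at `√x`, and the bound `ψ(y) ≤ 1.03883 y` at `x^{1/3}` and `x^{1/5}`,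
`x - θ(x)` is at most `(C + 1) x^{1/2} + c x^{1/4} + 1.03883 (x^{1/3} + x^{1/5})`.
Each term `x^{1 - α}` with `α ≥ 1/2` is `(log x)^k e^{-α log x} · x / (log x)^k`, and
`t ↦ t^k e^{-α t}` decreases for `t ≥ k / α`, in particular for `t ≥ b ≥ 2k`.
-/

open Real Chebyshev

lemma chebPsi_eq_psi : chebPsi = ψ := by
  funext x
  rw [chebPsi, psi_eq_sum_Icc, Nat.range_succ_eq_Icc_zero]

lemma chebTheta_eq_theta : chebTheta = θ := by
  funext x
  rw [chebTheta, theta_eq_sum_Icc, Nat.range_succ_eq_Icc_zero]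

lemma pow_mul_exp_neg_mul_le {k : ℕ} {α b t : ℝ} (hb : 0 < b) (hk : k ≤ α * b)
    (hbt : b ≤ t) : t ^ k * exp (-(α * t)) ≤ b ^ k * exp (-(α * b)) := by
  have ht : t ≤ b * exp (t / b - 1) := by
    calc t = b * (t / b - 1 + 1) := by field_simp; ring
      _ ≤ b * exp (t / b - 1) := by gcongr; exact add_one_le_exp _
  have hexp : k * (t / b - 1) ≤ α * (t - b) := by
    calc k * (t / b - 1) = k / b * (t - b) := by field_simp
      _ ≤ α * (t - b) := by
        gcongr
        rwa [div_le_iff₀ hb]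
  calc t ^ k * exp (-(α * t))
      ≤ (b * exp (t / b - 1)) ^ k * exp (-(α * t)) := by
        gcongr
        linarith
    _ = b ^ k * (exp (k * (t / b - 1)) * exp (-(α * t))) := by
        rw [mul_pow, ← exp_nat_mul, mul_assoc]
    _ ≤ b ^ k * (exp (α * (t - b)) * exp (-(α * t))) := by gcongr
    _ = b ^ k * exp (-(α * b)) := by rw [← exp_add]; ring_nf

lemma rpow_le_mul_div_log_pow {k : ℕ} {β b x : ℝ} (hx : 0 < x) (hb : 0 < b)
    (hk : k ≤ (1 - β) * b) (hbx : b ≤ log x) :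
    x ^ β ≤ b ^ k * exp (-((1 - β) * b)) * x / log x ^ k := by
  have hlog : 0 < log x ^ k := pow_pos (hb.trans_le hbx) k
  rw [le_div_iff₀ hlog]
  calc x ^ β * log x ^ k = log x ^ k * exp (-((1 - β) * log x)) * exp (log x) := by
        rw [rpow_def_of_pos hx, mul_comm, mul_assoc, ← exp_add]; ring_nf
    _ ≤ b ^ k * exp (-((1 - β) * b)) * exp (log x) := by
        gcongr ?_ * _
        exact pow_mul_exp_neg_mul_le hb hk hbx
    _ = b ^ k * exp (-((1 - β) * b)) * x := by rw [exp_log hx]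

lemma sub_mul_sqrt_le_of_div_sqrt_le {x y C : ℝ} (hx : 0 < x) (h : (x - y) / √x ≤ C) :
    x - C * √x ≤ y := by
  have := (div_le_iff₀ (sqrt_pos.2 hx)).1 h
  linarith

lemma le_add_mul_sqrt_of_neg_le_div_sqrt {x y c : ℝ} (hx : 0 < x) (h : -c ≤ (x - y) / √x) :
    y ≤ x + c * √x := by
  have := (le_div_iff₀ (sqrt_pos.2 hx)).1 h
  linarith

lemma theta_ge_of_psi_bounds {x c C A : ℝ} (hx : 0 < x) (hlo : x - C * √x ≤ ψ x)
    (hup : ψ √x ≤ √x + c * √√x) (hA : ∀ y > 0, ψ y ≤ A * y) :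
    x - ((C + 1) * x ^ (2 : ℝ)⁻¹ + c * x ^ (4 : ℝ)⁻¹ + A * x ^ (3 : ℝ)⁻¹
      + A * x ^ (5 : ℝ)⁻¹) ≤ θ x := by
  have hsqrt : √x = x ^ (2 : ℝ)⁻¹ := by rw [sqrt_eq_rpow, one_div]
  have hsqrt_sqrt : √√x = x ^ (4 : ℝ)⁻¹ := by
    rw [hsqrt, sqrt_eq_rpow, ← rpow_mul hx.le]; norm_num
  have hcp := psi_sub_theta_le_psi_add_psi_add_psi x
  have h3 := hA _ (rpow_pos_of_pos hx (3 : ℝ)⁻¹)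
  have h5 := hA _ (rpow_pos_of_pos hx (5 : ℝ)⁻¹)
  rw [← hsqrt] at hcp ⊢
  rw [← hsqrt_sqrt]
  linarith

theorem statement12_general (v : ℝ) (c C : ℝ) (hc : 0 < c) (hC : 0 < C)
    (h : ∀ x : ℝ, 100 ≤ x → x ≤ v →
      -c ≤ (x - chebPsi x) / Real.sqrt x ∧ (x - chebPsi x) / Real.sqrt x ≤ C)
    (hψ : ∀ x : ℝ, x > 0 → chebPsi x ≤ 1.03883 * x)
    (k : ℕ) (b : ℝ)
    (hb : max (10 ^ 4 : ℝ) (Real.exp (2 * k)) ≤ Real.exp b) :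
    ∀ x : ℝ, Real.exp b ≤ x → x ≤ v →
      chebTheta x ≥ x -
        (b ^ k * ((C + 1) * Real.exp (-b / 2) + 1.03883 * Real.exp (-2 * b / 3)
          + c * Real.exp (-3 * b / 4) + 1.03883 * Real.exp (-4 * b / 5))) *
          x / (Real.log x) ^ k := by
  intro x hbx hxv
  rw [chebPsi_eq_psi] at h hψ
  rw [chebTheta_eq_theta]
  have hx4 : (10 ^ 4 : ℝ) ≤ x := (le_max_left _ _).trans (hb.trans hbx)
  have hx0 : 0 < x := by linarith
  have hb0 : 0 < b := one_lt_exp_iff.1 (by linarith [le_max_left (10 ^ 4 : ℝ) (exp (2 * k))])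
  have hk : ∀ β ≤ (2 : ℝ)⁻¹, (k : ℝ) ≤ (1 - β) * b := fun β hβ => by
    nlinarith [exp_le_exp.1 ((le_max_right _ _).trans hb)]
  have hlog : b ≤ log x := (le_log_iff_exp_le hx0).2 hbx
  have hsqrt : 100 ≤ √x := (le_sqrt (by norm_num) hx0.le).2 (by linarith)
  have hsqrt_le : √x ≤ v := (sqrt_le_left hx0.le).2 (by nlinarith) |>.trans hxv
  have hθ := theta_ge_of_psi_bounds hx0
    (sub_mul_sqrt_le_of_div_sqrt_le hx0 (h x (by linarith) hxv).2)
    (le_add_mul_sqrt_of_neg_le_div_sqrt (by linarith) (h √x hsqrt hsqrt_le).1) hψ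
  have h2 := rpow_le_mul_div_log_pow hx0 hb0 (hk 2⁻¹ le_rfl) hlog
  have h3 := rpow_le_mul_div_log_pow hx0 hb0 (hk 3⁻¹ (by norm_num)) hlog
  have h4 := rpow_le_mul_div_log_pow hx0 hb0 (hk 4⁻¹ (by norm_num)) hlog
  have h5 := rpow_le_mul_div_log_pow hx0 hb0 (hk 5⁻¹ (by norm_num)) hlog
  rw [show -b / 2 = -((1 - (2 : ℝ)⁻¹) * b) by ring,
    show -2 * b / 3 = -((1 - (3 : ℝ)⁻¹) * b) by ring,
    show -3 * b / 4 = -((1 - (4 : ℝ)⁻¹) * b) by ring,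
    show -4 * b / 5 = -((1 - (5 : ℝ)⁻¹) * b) by ring]
  linear_combination hθ + (C + 1) * h2 + 1.03883 * h3 + c * h4 + 1.03883 * h5

theorem statement12 (v : ℝ) (hv : v ≥ 10 ^ 4) (c C : ℝ) (hc : 0 < c) (hC : 0 < C)
    (h : ∀ x : ℝ, 100 ≤ x → x ≤ v →
      -c ≤ (x - chebPsi x) / Real.sqrt x ∧ (x - chebPsi x) / Real.sqrt x ≤ C)
    (hψ : ∀ x : ℝ, x > 0 → chebPsi x ≤ 1.03883 * x)
    (k : ℕ) (b : ℝ)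
    (hb : max (10 ^ 4 : ℝ) (Real.exp (2 * k)) ≤ Real.exp b) (hbv : Real.exp b ≤ v) :
    ∀ x : ℝ, Real.exp b ≤ x → x ≤ v →
      chebTheta x ≥ x -
        (b ^ k * ((C + 1) * Real.exp (-b / 2) + 1.03883 * Real.exp (-2 * b / 3)
          + c * Real.exp (-3 * b / 4) + 1.03883 * Real.exp (-4 * b / 5))) *
          x / (Real.log x) ^ k :=
  statement12_general v c C hc hC h hψ k b hb
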